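/- (Tsirelson's bound) Let A₀, A₁, B₀, B₁ be 2×2 complex Hermitian matrices satisfying A₀² = A₁² = B₀² = B₁² = I (so each has eigenvalues ±1), let Ŝ = A₀⊗B₀ + A₁⊗B₀ + A₀⊗B₁ − A₁⊗B₁, and let ρ be any 4×4 positive semidefinite matrix with trace 1. Then |Tr(Ŝρ)| ≤ 2√2. -/

import Mathlib

open Matrix Kronecker Complex ComplexOrder

/-!
Put `aᵢ = Aᵢ ⊗ 1` and `bⱼ = 1 ⊗ Bⱼ`, commuting Hermitian involutions with
`Ŝ = a₀b₀ + a₁b₀ + a₀b₁ − a₁b₁`. For `s = √2` the sum-of-squares identity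
`(s a₀ − (b₀ + b₁))² + (s a₁ − (b₀ − b₁))² = 8 − 2√2 Ŝ`, together with `Tr(X²ρ) ≥ 0` for
Hermitian `X`, gives `Tr(Ŝρ) ≤ 2√2`; replacing `aᵢ` by `−aᵢ` gives the lower bound.
-/

theorem chsh_sum_sq {R : Type*} [Ring R] [Algebra ℝ R] (s : ℝ) {a₀ a₁ b₀ b₁ : R}
    (ha₀ : a₀ * a₀ = 1) (ha₁ : a₁ * a₁ = 1) (hb₀ : b₀ * b₀ = 1) (hb₁ : b₁ * b₁ = 1)
    (h₀₀ : Commute a₀ b₀) (h₀₁ : Commute a₀ b₁) (h₁₀ : Commute a₁ b₀) (h₁₁ : Commute a₁ b₁) :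
    (s • a₀ - (b₀ + b₁)) * (s • a₀ - (b₀ + b₁)) + (s • a₁ - (b₀ - b₁)) * (s • a₁ - (b₀ - b₁))
      = (2 * s ^ 2 + 4) • 1 - (2 * s) • (a₀ * b₀ + a₁ * b₀ + a₀ * b₁ - a₁ * b₁) := by
  simp only [sub_mul, mul_sub, add_mul, mul_add, smul_mul_assoc, mul_smul_comm,
    ha₀, ha₁, hb₀, hb₁, h₀₀.eq, h₀₁.eq, h₁₀.eq, h₁₁.eq]
  module

namespace Matrix

section Kronecker

variable {m n α : Type*}

theorem IsHermitian.kronecker [CommMagma α] [StarMul α] {A : Matrix m m α} {B : Matrix n n α}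
    (hA : A.IsHermitian) (hB : B.IsHermitian) : (A ⊗ₖ B).IsHermitian := by
  rw [IsHermitian, conjTranspose_kronecker, hA.eq, hB.eq]

variable [Fintype m] [Fintype n] [DecidableEq m] [DecidableEq n] [CommSemiring α]

theorem kronecker_mul_self_eq_one {A : Matrix m m α} {B : Matrix n n α}
    (hA : A * A = 1) (hB : B * B = 1) : (A ⊗ₖ B) * (A ⊗ₖ B) = 1 := by
  rw [← mul_kronecker_mul, hA, hB, one_kronecker_one]

theorem kronecker_one_mul_one_kronecker (A : Matrix m m α) (B : Matrix n n α) :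
    (A ⊗ₖ 1) * (1 ⊗ₖ B) = A ⊗ₖ B := by
  rw [← mul_kronecker_mul, mul_one, one_mul]

theorem commute_kronecker_one_one_kronecker (A : Matrix m m α) (B : Matrix n n α) :
    Commute (A ⊗ₖ 1) (1 ⊗ₖ B) := by
  rw [Commute, SemiconjBy, kronecker_one_mul_one_kronecker, ← mul_kronecker_mul, mul_one, one_mul]

end Kronecker

variable {ι : Type*} [Fintype ι]

theorem PosSemidef.re_trace_mul_self_mul_nonneg {ρ : Matrix ι ι ℂ} (hρ : ρ.PosSemidef)
    {X : Matrix ι ι ℂ} (hX : X.IsHermitian) : 0 ≤ (X * X * ρ).trace.re := by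
  have h := (hρ.mul_mul_conjTranspose_same X).trace_nonneg
  rw [hX.eq, trace_mul_cycle] at h
  exact (Complex.le_def.mp h).1

variable [DecidableEq ι]

theorem re_trace_chsh_le {a₀ a₁ b₀ b₁ ρ : Matrix ι ι ℂ}
    (ha₀ : a₀.IsHermitian) (ha₁ : a₁.IsHermitian) (hb₀ : b₀.IsHermitian) (hb₁ : b₁.IsHermitian)
    (ha₀sq : a₀ * a₀ = 1) (ha₁sq : a₁ * a₁ = 1) (hb₀sq : b₀ * b₀ = 1) (hb₁sq : b₁ * b₁ = 1)
    (h₀₀ : Commute a₀ b₀) (h₀₁ : Commute a₀ b₁) (h₁₀ : Commute a₁ b₀) (h₁₁ : Commute a₁ b₁)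
    (hρ : ρ.PosSemidef) (htr : ρ.trace = 1) :
    ((a₀ * b₀ + a₁ * b₀ + a₀ * b₁ - a₁ * b₁) * ρ).trace.re ≤ 2 * √2 := by
  set s : ℝ := √2
  have hX : (s • a₀ - (b₀ + b₁)).IsHermitian := (ha₀.smul (IsSelfAdjoint.all s)).sub (hb₀.add hb₁)
  have hY : (s • a₁ - (b₀ - b₁)).IsHermitian := (ha₁.smul (IsSelfAdjoint.all s)).sub (hb₀.sub hb₁)
  have hsum := add_nonneg (hρ.re_trace_mul_self_mul_nonneg hX)
    (hρ.re_trace_mul_self_mul_nonneg hY)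
  rw [← Complex.add_re, ← trace_add, ← add_mul,
    chsh_sum_sq s ha₀sq ha₁sq hb₀sq hb₁sq h₀₀ h₀₁ h₁₀ h₁₁, sub_mul, smul_mul_assoc,
    smul_mul_assoc, one_mul, trace_sub, trace_smul, trace_smul, htr, Complex.sub_re,
    Complex.smul_re, Complex.smul_re, Complex.one_re, smul_eq_mul, smul_eq_mul, mul_one] at hsum
  have hs : s ^ 2 = 2 := Real.sq_sqrt zero_le_two
  nlinarith [Real.sqrt_pos.mpr (zero_lt_two' ℝ)]

theorem abs_re_trace_chsh_le {a₀ a₁ b₀ b₁ ρ : Matrix ι ι ℂ}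
    (ha₀ : a₀.IsHermitian) (ha₁ : a₁.IsHermitian) (hb₀ : b₀.IsHermitian) (hb₁ : b₁.IsHermitian)
    (ha₀sq : a₀ * a₀ = 1) (ha₁sq : a₁ * a₁ = 1) (hb₀sq : b₀ * b₀ = 1) (hb₁sq : b₁ * b₁ = 1)
    (h₀₀ : Commute a₀ b₀) (h₀₁ : Commute a₀ b₁) (h₁₀ : Commute a₁ b₀) (h₁₁ : Commute a₁ b₁)
    (hρ : ρ.PosSemidef) (htr : ρ.trace = 1) :
    |((a₀ * b₀ + a₁ * b₀ + a₀ * b₁ - a₁ * b₁) * ρ).trace.re| ≤ 2 * √2 := by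
  have hlower := re_trace_chsh_le ha₀.neg ha₁.neg hb₀ hb₁ (by rwa [neg_mul_neg])
    (by rwa [neg_mul_neg]) hb₀sq hb₁sq h₀₀.neg_left h₀₁.neg_left h₁₀.neg_left h₁₁.neg_left hρ htr
  rw [show -a₀ * b₀ + -a₁ * b₀ + -a₀ * b₁ - -a₁ * b₁ = -(a₀ * b₀ + a₁ * b₀ + a₀ * b₁ - a₁ * b₁)
    by noncomm_ring, neg_mul, trace_neg, Complex.neg_re] at hlower
  exact abs_le.mpr ⟨by linarith, re_trace_chsh_le ha₀ ha₁ hb₀ hb₁ ha₀sq ha₁sq hb₀sq hb₁sq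
    h₀₀ h₀₁ h₁₀ h₁₁ hρ htr⟩

end Matrix

theorem tsirelson_bound (A₀ A₁ B₀ B₁ : Matrix (Fin 2) (Fin 2) ℂ)
    (hA₀ : A₀.IsHermitian) (hA₁ : A₁.IsHermitian)
    (hB₀ : B₀.IsHermitian) (hB₁ : B₁.IsHermitian)
    (hA₀sq : A₀ * A₀ = 1) (hA₁sq : A₁ * A₁ = 1)
    (hB₀sq : B₀ * B₀ = 1) (hB₁sq : B₁ * B₁ = 1)
    (ρ : Matrix (Fin 2 × Fin 2) (Fin 2 × Fin 2) ℂ)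
    (hρ : ρ.PosSemidef) (htr : ρ.trace = 1) :
    |(((A₀ ⊗ₖ B₀ + A₁ ⊗ₖ B₀ + A₀ ⊗ₖ B₁ - A₁ ⊗ₖ B₁) * ρ).trace).re| ≤ 2 * Real.sqrt 2 := by
  have hone : (1 : Matrix (Fin 2) (Fin 2) ℂ) * 1 = 1 := mul_one 1
  simpa only [kronecker_one_mul_one_kronecker] using abs_re_trace_chsh_le
    (hA₀.kronecker isHermitian_one) (hA₁.kronecker isHermitian_one)
    (isHermitian_one.kronecker hB₀) (isHermitian_one.kronecker hB₁)
    (kronecker_mul_self_eq_one hA₀sq hone) (kronecker_mul_self_eq_one hA₁sq hone)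
    (kronecker_mul_self_eq_one hone hB₀sq) (kronecker_mul_self_eq_one hone hB₁sq)
    (commute_kronecker_one_one_kronecker A₀ B₀) (commute_kronecker_one_one_kronecker A₀ B₁)
    (commute_kronecker_one_one_kronecker A₁ B₀) (commute_kronecker_one_one_kronecker A₁ B₁)
    hρ htr
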